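/- arXiv:1905.12730 — 2 statements merged into one kernel-verified Lean document; each statement's English description precedes it below -/
import Mathlib

section
/- Deterministic core of the product desynchronization lemma: Let d ≥ 1, let R₁, R₂ be real d×d matrices, let x, y ∈ ℝ^d, and let δ₁, δ₂, δ_I ≥ 0 and α₂ ∈ [0,1]. If |⟨R₁x, y⟩| ≤ δ₁‖x‖‖y‖, ‖R₁x‖² ≤ (1 + δ_I)‖x‖², and |⟨R₂(R₁x), y⟩ − α₂⟨R₁x, y⟩| ≤ δ₂‖R₁x‖‖y‖, then |⟨R₂R₁x, y⟩| ≤ (δ₁ + δ₂·√(1 + δ_I))·‖x‖‖y‖. -/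
/-! The leak `α₂⟨R₁x, y⟩` of the second factor is at most `|⟨R₁x, y⟩| ≤ δ₁‖x‖‖y‖` since
`0 ≤ α₂ ≤ 1`, and its error term `δ₂‖R₁x‖‖y‖` is controlled through the near-isometry bound
`‖R₁x‖ ≤ √(1 + δ_I)‖x‖`; the triangle inequality adds the two. -/

/-- The standard inner product on `ℝ^d` (vectors as functions `Fin d → ℝ`). -/
def ip {d : ℕ} (v w : Fin d → ℝ) : ℝ := ∑ i, v i * w i

/-- The squared Euclidean norm `‖v‖²` on `ℝ^d`. -/
def sqNorm {d : ℕ} (v : Fin d → ℝ) : ℝ := ∑ i, v i ^ 2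

/-- The Euclidean norm `‖v‖` on `ℝ^d`. -/
noncomputable def l2 {d : ℕ} (v : Fin d → ℝ) : ℝ := Real.sqrt (∑ i, v i ^ 2)

lemma sqNorm_nonneg {d : ℕ} (v : Fin d → ℝ) : 0 ≤ sqNorm v :=
  Finset.sum_nonneg fun i _ => sq_nonneg (v i)

lemma l2_eq_sqrt_sqNorm {d : ℕ} (v : Fin d → ℝ) : l2 v = Real.sqrt (sqNorm v) := rfl

lemma l2_nonneg {d : ℕ} (v : Fin d → ℝ) : 0 ≤ l2 v := Real.sqrt_nonneg _

lemma l2_le_sqrt_mul_l2_of_sqNorm_le {d : ℕ} {v w : Fin d → ℝ} {c : ℝ}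
    (h : sqNorm v ≤ c * sqNorm w) : l2 v ≤ Real.sqrt c * l2 w := by
  rw [l2_eq_sqrt_sqNorm, l2_eq_sqrt_sqNorm, ← Real.sqrt_mul' c (sqNorm_nonneg w)]
  exact Real.sqrt_le_sqrt h

lemma abs_le_add_of_abs_sub_mul_le {a b α ε η : ℝ} (hα₀ : 0 ≤ α) (hα₁ : α ≤ 1)
    (hb : |b| ≤ η) (hab : |a - α * b| ≤ ε) : |a| ≤ η + ε := by
  have hαb : |α * b| ≤ η := by
    rw [abs_mul, abs_of_nonneg hα₀]
    exact (mul_le_of_le_one_left (abs_nonneg b) hα₁).trans hb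
  calc |a| = |(a - α * b) + α * b| := by rw [sub_add_cancel]
    _ ≤ |a - α * b| + |α * b| := abs_add_le _ _
    _ ≤ η + ε := by linarith

theorem product_desynchronization_general
    (d : ℕ) (R₁ R₂ : Matrix (Fin d) (Fin d) ℝ)
    (x y : Fin d → ℝ) (δ₁ δ₂ δI α₂ : ℝ)
    (hδ₂ : 0 ≤ δ₂) (hα₂0 : 0 ≤ α₂) (hα₂1 : α₂ ≤ 1)
    (h1 : |ip (R₁.mulVec x) y| ≤ δ₁ * l2 x * l2 y)
    (h2 : sqNorm (R₁.mulVec x) ≤ (1 + δI) * sqNorm x)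
    (h3 : |ip (R₂.mulVec (R₁.mulVec x)) y - α₂ * ip (R₁.mulVec x) y|
            ≤ δ₂ * l2 (R₁.mulVec x) * l2 y) :
    |ip ((R₂ * R₁).mulVec x) y| ≤ (δ₁ + δ₂ * Real.sqrt (1 + δI)) * (l2 x * l2 y) := by
  have hR₁x : l2 (R₁.mulVec x) ≤ Real.sqrt (1 + δI) * l2 x :=
    l2_le_sqrt_mul_l2_of_sqNorm_le h2
  rw [← Matrix.mulVec_mulVec]
  calc |ip (R₂.mulVec (R₁.mulVec x)) y|
      ≤ δ₁ * l2 x * l2 y + δ₂ * l2 (R₁.mulVec x) * l2 y :=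
        abs_le_add_of_abs_sub_mul_le hα₂0 hα₂1 h1 h3
    _ ≤ δ₁ * l2 x * l2 y + δ₂ * (Real.sqrt (1 + δI) * l2 x) * l2 y := by
        gcongr
        exact l2_nonneg y
    _ = (δ₁ + δ₂ * Real.sqrt (1 + δI)) * (l2 x * l2 y) := by ring

/-- **Deterministic core of the product desynchronization lemma.**
If `|⟨R₁x, y⟩| ≤ δ₁‖x‖‖y‖`, `‖R₁x‖² ≤ (1 + δ_I)‖x‖²`, and
`|⟨R₂(R₁x), y⟩ − α₂⟨R₁x, y⟩| ≤ δ₂‖R₁x‖‖y‖`, then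
`|⟨R₂R₁x, y⟩| ≤ (δ₁ + δ₂·√(1 + δ_I))·‖x‖‖y‖`. -/
theorem product_desynchronization
    (d : ℕ) (hd : 1 ≤ d) (R₁ R₂ : Matrix (Fin d) (Fin d) ℝ)
    (x y : Fin d → ℝ) (δ₁ δ₂ δI α₂ : ℝ)
    (hδ₁ : 0 ≤ δ₁) (hδ₂ : 0 ≤ δ₂) (hδI : 0 ≤ δI) (hα₂0 : 0 ≤ α₂) (hα₂1 : α₂ ≤ 1)
    (h1 : |ip (R₁.mulVec x) y| ≤ δ₁ * l2 x * l2 y)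
    (h2 : sqNorm (R₁.mulVec x) ≤ (1 + δI) * sqNorm x)
    (h3 : |ip (R₂.mulVec (R₁.mulVec x)) y - α₂ * ip (R₁.mulVec x) y|
            ≤ δ₂ * l2 (R₁.mulVec x) * l2 y) :
    |ip ((R₂ * R₁).mulVec x) y| ≤ (δ₁ + δ₂ * Real.sqrt (1 + δI)) * (l2 x * l2 y) :=
  product_desynchronization_general d R₁ R₂ x y δ₁ δ₂ δI α₂ hδ₂ hα₂0 hα₂1 h1 h2 h3
end

section
/- Prototype A sketch-to-sketch similarity, case (i) (unrelated sketches are dissimilar): There exist constants C ≥ 1 and c > 0 such that the following holds. Let N ≥ 2, d ≥ 1, let R₁, …, R_N be independent Haar-random elements of O(d), let A and Ā be disjoint subsets of {1,…,N}, let xᵢ (i ∈ A) and x̄ᵢ (i ∈ Ā) be unit vectors in ℝ^d, and let wᵢ ≥ 0 (i ∈ A) and w̄ᵢ ≥ 0 (i ∈ Ā) each sum to 1. Set s = Σ_{i∈A} wᵢRᵢxᵢ and s̄ = Σ_{i∈Ā} w̄ᵢRᵢx̄ᵢ. Then Pr[ |⟨s, s̄⟩| > C·√(log N)/√d ] ≤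 N^{−c}. -/
/-!
For a Haar-random `R ∈ O(d)` and unit vectors `u, v`, left invariance shows that `⟨Ru, v⟩` has
the law of a coordinate `zᵢ` of `z = Ru`. Taking `v ∝ eᵢ - t eⱼ` gives
`E (zᵢ - t zⱼ)^(2k+2) = (1 + t²)^(k+1) E zᵢ^(2k+2)`, and the coefficient of `t²` yields
`(2k+1) E[zᵢ^(2k) zⱼ²] = E zᵢ^(2k+2)`. Summing over `j` with `‖z‖ = 1` gives
`E zᵢ^(2k+2) = (2k+1)/(2k+d) · E zᵢ^(2k)`, hence `E ⟨Ru, v⟩^(2k) ≤ (2k/d)^k`.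

Since `A` and `Ā` are disjoint, `⟨s, s̄⟩` is a convex combination of the `⟨Rᵢxᵢ, Rⱼx̄ⱼ⟩` with
`i ≠ j`, so `Rᵢ, Rⱼ` are independent; Fubini and Jensen give `E ⟨s, s̄⟩^(2k) ≤ (2k/d)^k`, and
Markov's inequality with `k = ⌈log N⌉` gives the tail bound with `C = 8`, `c = 1`.
-/

open MeasureTheory Matrix

noncomputable instance (d : ℕ) : MeasurableSpace (Matrix.orthogonalGroup (Fin d) ℝ) :=
  borel _

instance (d : ℕ) : BorelSpace (Matrix.orthogonalGroup (Fin d) ℝ) := ⟨rfl⟩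

-- Instance search does not see through `Matrix`; this makes continuous functions on finite
-- products of copies of `O(d)` measurable.
instance (d : ℕ) : SecondCountableTopology (orthogonalGroup (Fin d) ℝ) :=
  have : SecondCountableTopology (Matrix (Fin d) (Fin d) ℝ) :=
    inferInstanceAs (SecondCountableTopology (Fin d → Fin d → ℝ))
  TopologicalSpace.Subtype.secondCountableTopology _

variable {d : ℕ}

lemma ip_eq_dotProduct (v w : Fin d → ℝ) : ip v w = v ⬝ᵥ w := rfl

lemma sqNorm_eq_dotProduct (v : Fin d → ℝ) : sqNorm v = v ⬝ᵥ v := by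
  simp only [sqNorm, dotProduct, sq]

lemma sqNorm_mulVec_of_mem_orthogonalGroup {Q : Matrix (Fin d) (Fin d) ℝ}
    (hQ : Q ∈ orthogonalGroup (Fin d) ℝ) (v : Fin d → ℝ) :
    sqNorm (Q *ᵥ v) = sqNorm v := by
  have hQQ : Qᵀ * Q = 1 := by
    simpa [star_eq_conjTranspose] using (mem_orthogonalGroup_iff' (n := Fin d) (R := ℝ)).1 hQ
  rw [sqNorm_eq_dotProduct, sqNorm_eq_dotProduct, dotProduct_mulVec, ← mulVec_transpose,
    mulVec_mulVec, hQQ, one_mulVec]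

lemma sqNorm_coe_mulVec (R : orthogonalGroup (Fin d) ℝ) (u : Fin d → ℝ) :
    sqNorm (R.1 *ᵥ u) = sqNorm u :=
  sqNorm_mulVec_of_mem_orthogonalGroup R.2 u

lemma abs_ip_le_one {v w : Fin d → ℝ} (hv : sqNorm v = 1) (hw : sqNorm w = 1) :
    |ip v w| ≤ 1 := by
  rw [← sq_le_one_iff_abs_le_one]
  have := Finset.sum_mul_sq_le_sq_mul_sq Finset.univ v w
  rwa [← sqNorm, ← sqNorm, hv, hw, one_mul] at this

lemma abs_apply_le_one {v : Fin d → ℝ} (hv : sqNorm v = 1) (i : Fin d) : |v i| ≤ 1 := by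
  simpa [ip_eq_dotProduct] using
    abs_ip_le_one hv (w := Pi.single i 1) (by simp [sqNorm_eq_dotProduct])

@[fun_prop]
lemma Continuous.ip {X : Type*} [TopologicalSpace X] {f g : X → Fin d → ℝ} (hf : Continuous f)
    (hg : Continuous g) : Continuous fun x => ip (f x) (g x) := by
  unfold _root_.ip; fun_prop

lemma integrable_ip_pow {X : Type*} [TopologicalSpace X] [MeasurableSpace X]
    [OpensMeasurableSpace X] {ν : Measure X} [IsFiniteMeasure ν] {f g : X → Fin d → ℝ}
    (hf : Continuous f) (hg : Continuous g) (hf1 : ∀ x, sqNorm (f x) = 1)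
    (hg1 : ∀ x, sqNorm (g x) = 1) (n : ℕ) : Integrable (fun x => ip (f x) (g x) ^ n) ν :=
  Integrable.of_bound (by fun_prop) 1 (ae_of_all _ fun x => by
    rw [Real.norm_eq_abs, abs_pow]
    exact pow_le_one₀ (abs_nonneg _) (abs_ip_le_one (hf1 x) (hg1 x)))

lemma exists_mem_orthogonalGroup_row_eq {v : Fin d → ℝ} (hv : sqNorm v = 1) (i : Fin d) :
    ∃ Q ∈ orthogonalGroup (Fin d) ℝ, Q i = v := by
  let e : EuclideanSpace ℝ (Fin d) := WithLp.toLp 2 v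
  have he : Orthonormal ℝ (({i} : Set (Fin d)).domRestrict fun _ => e) := by
    rw [orthonormal_iff_ite]
    intro a b
    rw [if_pos (Subsingleton.elim a b)]
    change inner ℝ e e = 1
    rw [real_inner_self_eq_norm_sq, EuclideanSpace.norm_eq, Real.sq_sqrt (by positivity)]
    simpa [e, sqNorm] using hv
  obtain ⟨b, hb⟩ := he.exists_orthonormalBasis_extension_of_card_eq (by simp)
  refine ⟨b.toBasis.toMatrix (EuclideanSpace.basisFun (Fin d) ℝ),
    b.toMatrix_orthonormalBasis_mem_orthogonal _, funext fun j => ?_⟩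
  rw [Module.Basis.toMatrix_apply, OrthonormalBasis.coe_toBasis_repr_apply,
    OrthonormalBasis.repr_apply_apply, hb i rfl]
  simp [e, EuclideanSpace.inner_single_right]

lemma integral_comp_ip_mulVec {μ : Measure (orthogonalGroup (Fin d) ℝ)} [μ.IsMulLeftInvariant]
    (F : ℝ → ℝ) (u : Fin d → ℝ) {v : Fin d → ℝ} (hv : sqNorm v = 1) (i : Fin d) :
    ∫ R, F (ip (R.1 *ᵥ u) v) ∂μ = ∫ R, F ((R.1 *ᵥ u) i) ∂μ := by
  obtain ⟨Q, hQ, hQi⟩ := exists_mem_orthogonalGroup_row_eq hv i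
  rw [← integral_mul_left_eq_self
    (fun R : orthogonalGroup (Fin d) ℝ => F ((R.1 *ᵥ u) i)) ⟨Q, hQ⟩]
  congr! 3 with R
  change _ = ((Q * R.1) *ᵥ u) i
  rw [← mulVec_mulVec]
  change _ = Q i ⬝ᵥ (R.1 *ᵥ u)
  rw [hQi, ip_eq_dotProduct, dotProduct_comm]

open Polynomial in
lemma coeff_two_eq_of_forall_sum_eq_mul_one_add_sq_pow {a : ℕ → ℝ} {b : ℝ} {n N : ℕ}
    (hN : 2 < N) (h : ∀ t : ℝ, ∑ m ∈ Finset.range N, a m * t ^ m = (1 + t ^ 2) ^ n * b) :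
    a 2 = n * b := by
  have hp : (∑ m ∈ Finset.range N, C (a m) * X ^ m : ℝ[X]) = (1 + X ^ 2) ^ n * C b :=
    Polynomial.funext fun t => by simp [eval_finsetSum, h]
  have hcoeff : ((1 + X ^ 2 : ℝ[X]) ^ n).coeff 2 = n := by
    rw [show (1 + X ^ 2 : ℝ[X]) ^ n = expand ℝ 2 ((1 + X) ^ n) by simp, coeff_expand two_pos,
      coeff_one_add_X_pow]
    simp
  have := congrArg (coeff · 2) hp
  simpa [finsetSum_coeff, coeff_X_pow, hN, hcoeff] using this

section Moments

variable {μ : Measure (orthogonalGroup (Fin d) ℝ)} {u : Fin d → ℝ}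

lemma integral_sub_mul_pow_eq [μ.IsMulLeftInvariant] {i j : Fin d} (hij : i ≠ j) (t : ℝ)
    (n : ℕ) :
    ∫ R, ((R.1 *ᵥ u) i - t * (R.1 *ᵥ u) j) ^ (2 * n) ∂μ
      = (1 + t ^ 2) ^ n * ∫ R, (R.1 *ᵥ u) i ^ (2 * n) ∂μ := by
  -- `v = (eᵢ - t eⱼ) / √(1 + t²)` is a unit vector with `⟨z, v⟩ = (zᵢ - t zⱼ) / √(1 + t²)`.
  set r := √(1 + t ^ 2)
  have hr : 0 < r := by positivity
  have hr2 : r ^ 2 = 1 + t ^ 2 := Real.sq_sqrt (by positivity)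
  set v : Fin d → ℝ := r⁻¹ • (Pi.single i 1 - t • Pi.single j 1)
  have hv : sqNorm v = 1 := by
    simp [sqNorm_eq_dotProduct, v, dotProduct_sub, hij, hij.symm]
    field_simp
    linarith
  have hip : ∀ z : Fin d → ℝ, z i - t * z j = r * ip z v := fun z => by
    simp [ip_eq_dotProduct, v, dotProduct_sub]
    field_simp
  simp_rw [hip, mul_pow, pow_mul, hr2, ← pow_mul]
  rw [integral_const_mul, integral_comp_ip_mulVec (fun s => s ^ (2 * n)) u hv i]

lemma integrable_mulVec_apply_pow_mul_pow [IsFiniteMeasure μ] (hu : sqNorm u = 1)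
    (i j : Fin d) (p q : ℕ) :
    Integrable (fun R => (R.1 *ᵥ u) i ^ p * (R.1 *ᵥ u) j ^ q) μ := by
  refine Integrable.of_bound (by fun_prop) 1 (ae_of_all _ fun R => ?_)
  have hz := (sqNorm_coe_mulVec R u).trans hu
  rw [Real.norm_eq_abs, abs_mul, abs_pow, abs_pow]
  exact mul_le_one₀ (pow_le_one₀ (abs_nonneg _) (abs_apply_le_one hz i)) (by positivity)
    (pow_le_one₀ (abs_nonneg _) (abs_apply_le_one hz j))

lemma mul_integral_pow_mul_sq_eq [μ.IsMulLeftInvariant] [IsFiniteMeasure μ]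
    (hu : sqNorm u = 1) {i j : Fin d} (hij : i ≠ j) (k : ℕ) :
    (2 * k + 1) * ∫ R, (R.1 *ᵥ u) i ^ (2 * k) * (R.1 *ᵥ u) j ^ 2 ∂μ
      = ∫ R, (R.1 *ᵥ u) i ^ (2 * k + 2) ∂μ := by
  -- Expand `integral_sub_mul_pow_eq` binomially in `t` and compare the coefficients of `t²`.
  set W : ℕ → ℝ := fun m => ∫ R, (R.1 *ᵥ u) i ^ (2 * k + 2 - m) * (R.1 *ᵥ u) j ^ m ∂μ
  have hpoly : ∀ t : ℝ,
      ∑ m ∈ Finset.range (2 * k + 3), (-1) ^ m * (2 * k + 2).choose m * W m * t ^ m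
        = (1 + t ^ 2) ^ (k + 1) * ∫ R, (R.1 *ᵥ u) i ^ (2 * k + 2) ∂μ := by
    intro t
    have := integral_sub_mul_pow_eq (μ := μ) (u := u) hij t (k + 1)
    rw [mul_add_one] at this
    rw [← this]
    have hbinom : ∀ R : orthogonalGroup (Fin d) ℝ,
        ((R.1 *ᵥ u) i - t * (R.1 *ᵥ u) j) ^ (2 * k + 2)
          = ∑ m ∈ Finset.range (2 * k + 3), (-1) ^ m * (2 * k + 2).choose m * t ^ m *
            ((R.1 *ᵥ u) i ^ (2 * k + 2 - m) * (R.1 *ᵥ u) j ^ m) := fun R => by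
      rw [sub_eq_neg_add, add_pow]
      refine Finset.sum_congr rfl fun m _ => ?_
      ring
    simp_rw [hbinom]
    rw [integral_finsetSum _ fun m _ =>
      (integrable_mulVec_apply_pow_mul_pow hu i j _ _).const_mul _]
    refine Finset.sum_congr rfl fun m _ => ?_
    rw [integral_const_mul]
    ring
  have h2 := coeff_two_eq_of_forall_sum_eq_mul_one_add_sq_pow (by omega) hpoly
  have hchoose : ((2 * k + 2).choose 2 : ℝ) = (k + 1) * (2 * k + 1) := by
    rw [Nat.cast_choose_two]; push_cast; ring
  simp only [W, hchoose, Nat.add_sub_cancel, Nat.cast_add_one] at h2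
  have hk : (k + 1 : ℝ) ≠ 0 := by positivity
  apply mul_left_cancel₀ hk
  linear_combination h2

lemma integral_pow_recurrence [μ.IsMulLeftInvariant] [IsFiniteMeasure μ] (hu : sqNorm u = 1)
    (i : Fin d) (k : ℕ) :
    (2 * k + d) * ∫ R, (R.1 *ᵥ u) i ^ (2 * k + 2) ∂μ
      = (2 * k + 1) * ∫ R, (R.1 *ᵥ u) i ^ (2 * k) ∂μ := by
  set M := ∫ R, (R.1 *ᵥ u) i ^ (2 * k + 2) ∂μ
  have hsum : ∫ R, (R.1 *ᵥ u) i ^ (2 * k) ∂μ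
      = ∑ j, ∫ R, (R.1 *ᵥ u) i ^ (2 * k) * (R.1 *ᵥ u) j ^ 2 ∂μ := by
    rw [← integral_finsetSum _ fun j _ => integrable_mulVec_apply_pow_mul_pow hu i j _ _]
    congr! 2 with R
    rw [← Finset.mul_sum, ← sqNorm, sqNorm_coe_mulVec, hu, mul_one]
  have hterm : ∀ j, (2 * k + 1) * ∫ R, (R.1 *ᵥ u) i ^ (2 * k) * (R.1 *ᵥ u) j ^ 2 ∂μ
      = M + if j = i then 2 * k * M else 0 := by
    intro j
    by_cases hj : j = i
    · subst hj
      rw [if_pos rfl]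
      simp only [← pow_add, M]
      ring
    · rw [mul_integral_pow_mul_sq_eq hu (Ne.symm hj), if_neg hj, add_zero]
  rw [hsum, Finset.mul_sum, Finset.sum_congr rfl fun j _ => hterm j, Finset.sum_add_distrib,
    Finset.sum_ite_eq']
  simp only [Finset.sum_const, Finset.card_univ, Fintype.card_fin, nsmul_eq_mul,
    Finset.mem_univ, if_true]
  ring

lemma integral_pow_le [μ.IsMulLeftInvariant] [IsProbabilityMeasure μ] (hu : sqNorm u = 1)
    (i : Fin d) (k : ℕ) : ∫ R, (R.1 *ᵥ u) i ^ (2 * k) ∂μ ≤ (2 * k / d) ^ k := by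
  induction k with
  | zero => simp
  | succ k ih =>
    have hd : (0 : ℝ) < d := Nat.cast_pos.2 i.pos
    have hM : 0 ≤ ∫ R, (R.1 *ᵥ u) i ^ (2 * k) ∂μ :=
      integral_nonneg fun R => (even_two_mul k).pow_nonneg _
    have hrec : ∫ R, (R.1 *ᵥ u) i ^ (2 * (k + 1)) ∂μ
        = (2 * k + 1) / (2 * k + d) * ∫ R, (R.1 *ᵥ u) i ^ (2 * k) ∂μ := by
      rw [div_mul_eq_mul_div, eq_div_iff (by positivity), mul_comm, mul_add_one,
        integral_pow_recurrence hu i k]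
    have hratio : (2 * k + 1) / (2 * k + d) ≤ (2 * (k + 1) : ℝ) / d := by
      rw [div_le_div_iff₀ (by positivity) hd]
      nlinarith
    have hmono : (2 * k / d : ℝ) ^ k ≤ (2 * (k + 1) / d) ^ k := by gcongr; linarith
    rw [hrec, Nat.cast_add_one, pow_succ']
    exact mul_le_mul hratio (ih.trans hmono) hM (by positivity)

end Moments

lemma integral_ip_mulVec_pow_le {μ : Measure (orthogonalGroup (Fin d) ℝ)} [μ.IsMulLeftInvariant]
    [IsProbabilityMeasure μ] {u v : Fin d → ℝ} (hu : sqNorm u = 1) (hv : sqNorm v = 1)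
    (k : ℕ) :
    ∫ R, ip (R.1 *ᵥ u) v ^ (2 * k) ∂μ ≤ (2 * k / d) ^ k := by
  obtain ⟨i, -⟩ := Finset.exists_ne_zero_of_sum_ne_zero (hv.trans_ne one_ne_zero)
  rw [integral_comp_ip_mulVec (· ^ (2 * k)) u hv i]
  exact integral_pow_le hu i k

lemma pi_map_prodMk_eq_prod {α ι : Type*} [MeasurableSpace α] [Fintype ι]
    (μ : Measure α) [IsProbabilityMeasure μ] {i j : ι} (hij : i ≠ j) :
    (Measure.pi fun _ : ι => μ).map (fun x => (x i, x j)) = μ.prod μ := by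
  have hind : ProbabilityTheory.IndepFun (fun x : ι → α => x i) (fun x => x j)
      (Measure.pi fun _ => μ) :=
    (ProbabilityTheory.iIndepFun_pi (X := fun _ => id) fun _ => aemeasurable_id).indepFun hij
  rw [(ProbabilityTheory.indepFun_iff_map_prod_eq_prod_map_map
    (measurable_pi_apply i).aemeasurable (measurable_pi_apply j).aemeasurable).1 hind,
    (measurePreserving_eval _ i).map_eq, (measurePreserving_eval _ j).map_eq]

lemma integral_pi_ip_mulVec_mulVec_pow_le {N : ℕ} {μ : Measure (orthogonalGroup (Fin d) ℝ)}
    [μ.IsMulLeftInvariant] [IsProbabilityMeasure μ] {i j : Fin N} (hij : i ≠ j)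
    {u v : Fin d → ℝ} (hu : sqNorm u = 1) (hv : sqNorm v = 1) (k : ℕ) :
    ∫ R, ip ((R i).1 *ᵥ u) ((R j).1 *ᵥ v) ^ (2 * k) ∂(Measure.pi fun _ => μ)
      ≤ (2 * k / d) ^ k := by
  have hg : Integrable (fun p : orthogonalGroup (Fin d) ℝ × orthogonalGroup (Fin d) ℝ =>
      ip (p.2.1 *ᵥ u) (p.1.1 *ᵥ v) ^ (2 * k)) (μ.prod μ) := by
    apply integrable_ip_pow (by fun_prop) (by fun_prop)
    · exact fun p => (sqNorm_coe_mulVec p.2 u).trans hu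
    · exact fun p => (sqNorm_coe_mulVec p.1 v).trans hv
  calc ∫ R, ip ((R i).1 *ᵥ u) ((R j).1 *ᵥ v) ^ (2 * k) ∂(Measure.pi fun _ => μ)
      = ∫ S, ∫ R, ip (R.1 *ᵥ u) (S.1 *ᵥ v) ^ (2 * k) ∂μ ∂μ := by
        have hmap := pi_map_prodMk_eq_prod μ hij.symm
        rw [← integral_prod _ hg, ← hmap,
          integral_map (by fun_prop) (by rw [hmap]; exact hg.aestronglyMeasurable)]
    _ ≤ ∫ _, (2 * k / d : ℝ) ^ k ∂μ :=
        integral_mono_of_nonneg (ae_of_all _ fun S => integral_nonneg fun R =>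
          (even_two_mul k).pow_nonneg _) (integrable_const _) (ae_of_all _ fun S =>
          integral_ip_mulVec_pow_le hu ((sqNorm_coe_mulVec S v).trans hv) k)
    _ = (2 * k / d) ^ k := by simp

lemma ip_sum_smul_sum_smul {ι : Type*} (s t : Finset ι) (a b : ι → ℝ)
    (f g : ι → Fin d → ℝ) :
    ip (∑ i ∈ s, a i • f i) (∑ j ∈ t, b j • g j)
      = ∑ p ∈ s ×ˢ t, a p.1 * b p.2 * ip (f p.1) (g p.2) := by
  simp only [ip_eq_dotProduct, sum_dotProduct, dotProduct_sum, smul_dotProduct, dotProduct_smul,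
    Finset.sum_product, smul_eq_mul, Finset.mul_sum, mul_assoc]
  rw [Finset.sum_comm]
  simp only [mul_left_comm]

section ConvexCombination

variable {X ι : Type*} [MeasurableSpace X] {ν : Measure X} {s : Finset ι} {ω : ι → ℝ}
  {Y : ι → X → ℝ} {n : ℕ}

lemma integrable_sum_mul_pow_of_even (hω : ∀ p ∈ s, 0 ≤ ω p) (hω1 : ∑ p ∈ s, ω p = 1)
    (hn : Even n) (hY : ∀ p ∈ s, Integrable (fun x => Y p x ^ n) ν)
    (hm : AEStronglyMeasurable (fun x => ∑ p ∈ s, ω p * Y p x) ν) :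
    Integrable (fun x => (∑ p ∈ s, ω p * Y p x) ^ n) ν :=
  (integrable_finsetSum s fun p hp => (hY p hp).const_mul (ω p)).mono' (hm.pow n)
    (ae_of_all _ fun x => by
      rw [Real.norm_eq_abs, abs_of_nonneg (hn.pow_nonneg _)]
      exact Real.pow_arith_mean_le_arith_mean_pow_of_even s ω _ hω hω1 hn)

lemma integral_sum_mul_pow_le_of_even (hω : ∀ p ∈ s, 0 ≤ ω p) (hω1 : ∑ p ∈ s, ω p = 1)
    (hn : Even n) (hY : ∀ p ∈ s, Integrable (fun x => Y p x ^ n) ν) {b : ℝ}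
    (hb : ∀ p ∈ s, ∫ x, Y p x ^ n ∂ν ≤ b) :
    ∫ x, (∑ p ∈ s, ω p * Y p x) ^ n ∂ν ≤ b :=
  calc ∫ x, (∑ p ∈ s, ω p * Y p x) ^ n ∂ν
      ≤ ∫ x, ∑ p ∈ s, ω p * Y p x ^ n ∂ν :=
        integral_mono_of_nonneg (ae_of_all _ fun x => hn.pow_nonneg _)
          (integrable_finsetSum s fun p hp => (hY p hp).const_mul (ω p))
          (ae_of_all _ fun x => Real.pow_arith_mean_le_arith_mean_pow_of_even s ω _ hω hω1 hn)
    _ = ∑ p ∈ s, ω p * ∫ x, Y p x ^ n ∂ν := by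
        rw [integral_finsetSum s fun p hp => (hY p hp).const_mul (ω p)]
        simp_rw [integral_const_mul]
    _ ≤ ∑ p ∈ s, ω p * b :=
        Finset.sum_le_sum fun p hp => mul_le_mul_of_nonneg_left (hb p hp) (hω p hp)
    _ = b := by rw [← Finset.sum_mul, hω1, one_mul]

end ConvexCombination

lemma sum_product_mul_eq_one {ι : Type*} {s t : Finset ι} {a b : ι → ℝ}
    (ha : ∑ i ∈ s, a i = 1) (hb : ∑ j ∈ t, b j = 1) : ∑ p ∈ s ×ˢ t, a p.1 * b p.2 = 1 := by
  rw [Finset.sum_product, ← Finset.sum_mul_sum, ha, hb, one_mul]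

section Sketch

variable {N : ℕ} {μ : Measure (orthogonalGroup (Fin d) ℝ)} [IsProbabilityMeasure μ]
  {A B : Finset (Fin N)} {x y : Fin N → Fin d → ℝ} {w w' : Fin N → ℝ}

lemma integrable_pi_ip_mulVec_mulVec_pow (i j : Fin N) {u v : Fin d → ℝ} (hu : sqNorm u = 1)
    (hv : sqNorm v = 1) (n : ℕ) :
    Integrable (fun R => ip ((R i).1 *ᵥ u) ((R j).1 *ᵥ v) ^ n) (Measure.pi fun _ => μ) := by
  apply integrable_ip_pow (by fun_prop) (by fun_prop)
  · exact fun R => (sqNorm_coe_mulVec (R i) u).trans hu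
  · exact fun R => (sqNorm_coe_mulVec (R j) v).trans hv

lemma integrable_pi_ip_sketch_pow (hx : ∀ i ∈ A, sqNorm (x i) = 1)
    (hy : ∀ i ∈ B, sqNorm (y i) = 1) (hw : ∀ i, 0 ≤ w i) (hw' : ∀ i, 0 ≤ w' i)
    (hw1 : ∑ i ∈ A, w i = 1) (hw1' : ∑ i ∈ B, w' i = 1) (k : ℕ) :
    Integrable (fun R => ip (∑ i ∈ A, w i • (R i).1 *ᵥ x i) (∑ i ∈ B, w' i • (R i).1 *ᵥ y i)
      ^ (2 * k)) (Measure.pi fun _ => μ) := by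
  simp_rw [ip_sum_smul_sum_smul]
  refine integrable_sum_mul_pow_of_even (fun p _ => mul_nonneg (hw _) (hw' _))
    (sum_product_mul_eq_one hw1 hw1') (even_two_mul k) (fun p hp => ?_) (by fun_prop)
  obtain ⟨hp1, hp2⟩ := Finset.mem_product.1 hp
  exact integrable_pi_ip_mulVec_mulVec_pow _ _ (hx _ hp1) (hy _ hp2) _

lemma integral_pi_ip_sketch_pow_le [μ.IsMulLeftInvariant] (hAB : Disjoint A B)
    (hx : ∀ i ∈ A, sqNorm (x i) = 1) (hy : ∀ i ∈ B, sqNorm (y i) = 1) (hw : ∀ i, 0 ≤ w i)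
    (hw' : ∀ i, 0 ≤ w' i) (hw1 : ∑ i ∈ A, w i = 1) (hw1' : ∑ i ∈ B, w' i = 1) (k : ℕ) :
    ∫ R, ip (∑ i ∈ A, w i • (R i).1 *ᵥ x i) (∑ i ∈ B, w' i • (R i).1 *ᵥ y i) ^ (2 * k)
      ∂(Measure.pi fun _ => μ) ≤ (2 * k / d) ^ k := by
  simp_rw [ip_sum_smul_sum_smul]
  refine integral_sum_mul_pow_le_of_even (fun p _ => mul_nonneg (hw _) (hw' _))
    (sum_product_mul_eq_one hw1 hw1') (even_two_mul k) (fun p hp => ?_) (fun p hp => ?_)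
  all_goals obtain ⟨hp1, hp2⟩ := Finset.mem_product.1 hp
  · exact integrable_pi_ip_mulVec_mulVec_pow _ _ (hx _ hp1) (hy _ hp2) _
  · exact integral_pi_ip_mulVec_mulVec_pow_le (Finset.disjoint_iff_ne.1 hAB _ hp1 _ hp2)
      (hx _ hp1) (hy _ hp2) k

end Sketch

lemma measureReal_lt_abs_le_integral_pow_div {X : Type*} [MeasurableSpace X] {ν : Measure X}
    [IsFiniteMeasure ν] {f : X → ℝ} {n : ℕ} (hn : Even n) (hf : Integrable (fun x => f x ^ n) ν)
    {t : ℝ} (ht : 0 < t) : ν.real {x | t < |f x|} ≤ (∫ x, f x ^ n ∂ν) / t ^ n := by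
  rw [le_div_iff₀ (pow_pos ht n), mul_comm]
  calc t ^ n * ν.real {x | t < |f x|} ≤ t ^ n * ν.real {x | t ^ n ≤ f x ^ n} :=
        mul_le_mul_of_nonneg_left (measureReal_mono fun x hx =>
          (pow_le_pow_left₀ ht.le (le_of_lt hx) n).trans_eq (hn.pow_abs _)) (by positivity)
    _ ≤ ∫ x, f x ^ n ∂ν :=
        mul_meas_ge_le_integral_of_nonneg (ae_of_all _ fun x => hn.pow_nonneg _) hf _

lemma ceil_div_pow_le_exp_neg {L : ℝ} (hL : 1 / 2 ≤ L) :
    ((⌈L⌉₊ : ℝ) / (32 * L)) ^ ⌈L⌉₊ ≤ Real.exp (-L) := by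
  have hk : (⌈L⌉₊ : ℝ) < L + 1 := Nat.ceil_lt_add_one (by linarith)
  have hbase : (⌈L⌉₊ : ℝ) / (32 * L) ≤ Real.exp (-1) := by
    rw [Real.exp_neg, div_le_iff₀ (by positivity), inv_mul_eq_div, le_div_iff₀ (Real.exp_pos 1)]
    nlinarith [Real.exp_one_lt_d9, mul_lt_mul_of_pos_right hk (Real.exp_pos 1)]
  calc ((⌈L⌉₊ : ℝ) / (32 * L)) ^ ⌈L⌉₊ ≤ Real.exp (-1) ^ ⌈L⌉₊ :=
        pow_le_pow_left₀ (by positivity) hbase _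
    _ = Real.exp (-⌈L⌉₊) := by rw [← Real.exp_nat_mul, mul_neg_one]
    _ ≤ Real.exp (-L) := Real.exp_le_exp.2 (neg_le_neg (Nat.le_ceil L))

lemma two_mul_ceil_log_div_pow_div_le {N d : ℕ} (hN : 2 ≤ N) (hd : 0 < d) :
    (2 * ⌈Real.log N⌉₊ / d : ℝ) ^ ⌈Real.log N⌉₊
        / (8 * √(Real.log N) / √d) ^ (2 * ⌈Real.log N⌉₊) ≤ (N : ℝ) ^ (-1 : ℝ) := by
  set L := Real.log N
  have hL : 1 / 2 ≤ L :=
    (by linarith [Real.log_two_gt_d9] : (1 / 2 : ℝ) ≤ Real.log 2).trans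
      (Real.log_le_log two_pos (by exact_mod_cast hN))
  have hd0 : (0 : ℝ) < d := by exact_mod_cast hd
  have ht2 : (8 * √L / √d) ^ 2 = 64 * L / d := by
    rw [div_pow, mul_pow, Real.sq_sqrt (by linarith), Real.sq_sqrt hd0.le]
    norm_num
  calc (2 * ⌈L⌉₊ / d : ℝ) ^ ⌈L⌉₊ / (8 * √L / √d) ^ (2 * ⌈L⌉₊) = (⌈L⌉₊ / (32 * L)) ^ ⌈L⌉₊ := by
        rw [pow_mul, ht2, ← div_pow]
        congr 1
        field_simp
        ring
    _ ≤ Real.exp (-L) := ceil_div_pow_le_exp_neg hL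
    _ = (N : ℝ) ^ (-1 : ℝ) := by
        rw [Real.rpow_neg_one, Real.exp_neg, Real.exp_log (by positivity)]

/-- **Prototype A sketch-to-sketch similarity, case (i): unrelated sketches are dissimilar.**
There are constants `C ≥ 1`, `c > 0` such that: for `N ≥ 2`, `d ≥ 1`, independent Haar-random
orthogonal matrices `R₁,…,R_N`, disjoint module sets `A, Ā ⊆ {1,…,N}`, unit attribute vectors
and nonnegative weights each summing to `1`, the sketches `s = Σ_{i∈A} wᵢRᵢxᵢ` and
`s̄ = Σ_{i∈Ā} w̄ᵢRᵢx̄ᵢ` satisfy `Pr[ |⟨s, s̄⟩| > C·√(log N)/√d ] ≤ N^{−c}`. -/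
theorem prototypeA_similarity_disjoint :
    ∃ C : ℝ, 1 ≤ C ∧ ∃ c : ℝ, 0 < c ∧
      ∀ (N d : ℕ), 2 ≤ N → 1 ≤ d →
      ∀ A Abar : Finset (Fin N), Disjoint A Abar →
      ∀ x xbar : Fin N → Fin d → ℝ,
        (∀ i ∈ A, sqNorm (x i) = 1) → (∀ i ∈ Abar, sqNorm (xbar i) = 1) →
      ∀ w wbar : Fin N → ℝ, (∀ i, 0 ≤ w i) → (∀ i, 0 ≤ wbar i) →
        (∑ i ∈ A, w i) = 1 → (∑ i ∈ Abar, wbar i) = 1 →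
      ∀ μ : Measure (Matrix.orthogonalGroup (Fin d) ℝ),
        μ.IsHaarMeasure → IsProbabilityMeasure μ →
        (Measure.pi fun _ : Fin N => μ)
            {R : Fin N → Matrix.orthogonalGroup (Fin d) ℝ |
              C * Real.sqrt (Real.log N) / Real.sqrt d <
                |ip (∑ i ∈ A, w i • (R i : Matrix (Fin d) (Fin d) ℝ).mulVec (x i))
                  (∑ i ∈ Abar, wbar i • (R i : Matrix (Fin d) (Fin d) ℝ).mulVec (xbar i))|}
          ≤ ENNReal.ofReal ((N : ℝ) ^ (-c : ℝ)) := by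
  refine ⟨8, by norm_num, 1, one_pos, ?_⟩
  intro N d hN hd A Abar hAB x xbar hx hxbar w wbar hw hwbar hw1 hwbar1 μ _ _
  set k := ⌈Real.log N⌉₊
  have ht : 0 < 8 * √(Real.log N) / √d :=
    div_pos (mul_pos (by norm_num) (Real.sqrt_pos.2 (Real.log_pos (by exact_mod_cast hN))))
      (Real.sqrt_pos.2 (by exact_mod_cast hd))
  rw [← ofReal_measureReal]
  refine ENNReal.ofReal_le_ofReal ?_
  calc _ ≤ _ := measureReal_lt_abs_le_integral_pow_div (even_two_mul k)
        (integrable_pi_ip_sketch_pow hx hxbar hw hwbar hw1 hwbar1 k) ht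
    _ ≤ (2 * k / d) ^ k / (8 * √(Real.log N) / √d) ^ (2 * k) := by
        gcongr
        exact integral_pi_ip_sketch_pow_le hAB hx hxbar hw hwbar hw1 hwbar1 k
    _ ≤ (N : ℝ) ^ (-1 : ℝ) := two_mul_ceil_log_div_pow_div_le hN hd
end
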